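/- arXiv:1309.6471 — 3 statements merged into one kernel-verified Lean document; each statement's English description precedes it below -/
import Mathlib

section
/- Let T be a tree, 𝒫 = (P_v)_{v∈V} a family of paths of T, and suppose ⟨T,𝒫⟩ is a representation of a pair (G,G'). Then no hole of G with at least 4 vertices contains an edge of G': if vertices v_0, v_1, …, v_{k−1} (k ≥ 4) induce a chordless cycle in G (consecutive ones adjacent, non-consecutive ones non-adjacent), then for every index i the pair {v_i, v_{(i+1) mod k}} is not an edge of G'. -/
open SimpleGraph

namespace ENPT

variable {β V W U : Type}

/-- A graph on a subset of `β`, modeled as a subgraph of the complete graph on `β`. -/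
abbrev SubG (β : Type) := SimpleGraph.Subgraph (⊤ : SimpleGraph β)

/-- `H` is a path: connected, with at least one edge, and maximum degree 2. -/
def IsPathSub (H : SubG β) : Prop :=
  H.Connected ∧ H.edgeSet.Nonempty ∧ ∀ v : β, (H.neighborSet v).ncard ≤ 2

/-- The split vertices of two subgraphs: vertices of degree at least 3 in their union. -/
def Split (P Q : SubG β) : Set β := {v | 3 ≤ ((P ⊔ Q).neighborSet v).ncard}

/-- Two subgraphs edge-intersect. -/
def EdgeInt (P Q : SubG β) : Prop := (P.edgeSet ∩ Q.edgeSet).Nonempty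

lemma EdgeInt.symm {P Q : SubG β} (h : EdgeInt P Q) : EdgeInt Q P := by
  unfold EdgeInt at h ⊢; rwa [Set.inter_comm]

lemma Split_comm (P Q : SubG β) : Split P Q = Split Q P := by
  unfold Split; rw [sup_comm]

/-- `P ∼ Q` : edge-intersecting and non-splitting. -/
def NonSplit (P Q : SubG β) : Prop := EdgeInt P Q ∧ Split P Q = ∅

lemma NonSplit.symm {P Q : SubG β} (h : NonSplit P Q) : NonSplit Q P :=
  ⟨h.1.symm, by rw [Split_comm]; exact h.2⟩

/-- The EPT graph of a family of paths. -/
def EPTg (Ps : V → SubG β) : SimpleGraph V where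
  Adj u v := u ≠ v ∧ EdgeInt (Ps u) (Ps v)
  symm := ⟨fun u v h => ⟨Ne.symm h.1, h.2.symm⟩⟩
  loopless := ⟨fun u h => h.1 rfl⟩

/-- The ENPT graph of a family of paths. -/
def ENPTg (Ps : V → SubG β) : SimpleGraph V where
  Adj u v := u ≠ v ∧ NonSplit (Ps u) (Ps v)
  symm := ⟨fun u v h => ⟨Ne.symm h.1, h.2.symm⟩⟩
  loopless := ⟨fun u h => h.1 rfl⟩

/-- `⟨T, Ps⟩` is a representation of the pair `(G, G')`. -/
structure IsRep (T : SubG β) (Ps : V → SubG β) (G G' : SimpleGraph V) : Prop where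
  tree : T.coe.IsTree
  sub : ∀ v, Ps v ≤ T
  path : ∀ v, IsPathSub (Ps v)
  ept : EPTg Ps = G
  enpt : ENPTg Ps = G'

/-- Property (P3) of a representation: no red edge-clique of size 3. -/
def SatP3 (Ps : V → SubG β) : Prop :=
  ¬ ∃ (e : Sym2 β) (p q r : V), p ≠ q ∧ p ≠ r ∧ q ≠ r ∧
    e ∈ (Ps p).edgeSet ∧ e ∈ (Ps q).edgeSet ∧ e ∈ (Ps r).edgeSet ∧
    (Split (Ps p) (Ps q)).Nonempty ∧ (Split (Ps p) (Ps r)).Nonempty ∧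
    (Split (Ps q) (Ps r)).Nonempty

/-- The map merging `q` into `p`. -/
def mergeMap [DecidableEq V] (p q : V) : V → V := fun x => if x = q then p else x

/-- The image of a subgraph under the merge of `b` into `a` (contraction of `{a,b}`). -/
def cImage [DecidableEq β] (a b : β) (H : SubG β) : SubG β where
  verts := mergeMap a b '' H.verts
  Adj x y := x ≠ y ∧ ∃ x' y', H.Adj x' y' ∧ x = mergeMap a b x' ∧ y = mergeMap a b y'
  adj_sub := by
    rintro x y ⟨h, -⟩
    exact h
  edge_vert := by
    rintro x y ⟨h, x', y', hadj, rfl, rfl⟩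
    exact ⟨x', H.edge_vert hadj, rfl⟩
  symm := by
    constructor
    rintro x y ⟨h, x', y', hadj, rfl, rfl⟩
    exact ⟨h.symm, y', x', hadj.symm, rfl, rfl⟩

/-- Delete from `H` the vertex `x` and all edges at `x` (used for tail removal). -/
def delTail (x : β) (H : SubG β) : SubG β where
  verts := H.verts \ {x}
  Adj u w := H.Adj u w ∧ u ≠ x ∧ w ≠ x
  adj_sub := fun h => H.adj_sub h.1
  edge_vert := by
    rintro u w ⟨h, hu, hw⟩
    exact ⟨H.edge_vert h, by simpa using hu⟩
  symm := by
    constructor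
    rintro u w ⟨h, hu, hw⟩
    exact ⟨h.symm, hw, hu⟩

/-- A pair `⟨tree, family of paths⟩`. -/
structure Rep (β V : Type) where
  T : SubG β
  P : V → SubG β

/-- Well-formedness: the tree is a tree and each member of the family is a path of it. -/
def Rep.WF (R : Rep β V) : Prop :=
  R.T.coe.IsTree ∧ (∀ v, R.P v ≤ R.T) ∧ ∀ v, IsPathSub (R.P v)

/-- `R` is a representation of the pair `(G, G')`. -/
def Rep.IsRepOf (R : Rep β V) (G G' : SimpleGraph V) : Prop := IsRep R.T R.P G G'

/-- A single minifying operation: contraction of a tree edge, or removal of a tail of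
one of the paths. -/
inductive MinifyStep [DecidableEq β] [DecidableEq V] : Rep β V → Rep β V → Prop
  | contract (R : Rep β V) (a b : β) (hab : R.T.Adj a b)
      (hkeep : ∀ v, (cImage a b (R.P v)).edgeSet.Nonempty) :
      MinifyStep R ⟨cImage a b R.T, fun v => cImage a b (R.P v)⟩
  | tail (R : Rep β V) (v₀ : V) (x y : β) (hxy : (R.P v₀).Adj x y)
      (hdeg : ((R.P v₀).neighborSet x).ncard = 1)
      (htwo : 2 ≤ (R.P v₀).edgeSet.ncard) :
      MinifyStep R ⟨R.T, Function.update R.P v₀ (delTail x (R.P v₀))⟩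

/-- A minimal representation of `(G, G')`: no single minifying operation yields again a
representation of `(G, G')`. -/
def IsMinimalRep [DecidableEq β] [DecidableEq V] (T : SubG β) (Ps : V → SubG β)
    (G G' : SimpleGraph V) : Prop :=
  IsRep T Ps G G' ∧ ∀ R' : Rep β V, MinifyStep ⟨T, Ps⟩ R' → ¬ R'.IsRepOf G G'

/-- The cycle on `ZMod n`, vertices labeled in cyclic order. -/
def cycleG (n : ℕ) : SimpleGraph (ZMod n) :=
  SimpleGraph.fromRel (fun i j => j = i + 1)

/-- Property (P2) of a pair: no four vertices inducing a `K4` in `G` and a `P4` in `G'`. -/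
def NoK4P4 (G G' : SimpleGraph V) : Prop :=
  ¬ ∃ a b c d : V,
    G.Adj a b ∧ G.Adj a c ∧ G.Adj a d ∧ G.Adj b c ∧ G.Adj b d ∧ G.Adj c d ∧
    G'.Adj a b ∧ G'.Adj b c ∧ G'.Adj c d ∧ ¬G'.Adj a c ∧ ¬G'.Adj a d ∧ ¬G'.Adj b d

/-- The contraction `G/e` of the edge `e = {p,q}`, merging `q` into `p`,
realized on the vertex set `V ∖ {q}`. -/
def contrG [DecidableEq V] (G : SimpleGraph V) (p q : V) : SimpleGraph {x : V // x ≠ q} where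
  Adj a b := a ≠ b ∧ ∃ x y : V, G.Adj x y ∧ (a : V) = mergeMap p q x ∧ (b : V) = mergeMap p q y
  symm := by
    constructor
    rintro a b ⟨h, x, y, hxy, hx, hy⟩
    exact ⟨h.symm, y, x, hxy.symm, hy, hx⟩
  loopless := by constructor; rintro a ⟨h, -⟩; exact h rfl

/-- The contractibility condition for the edge `{p,q}` in the pair `(G,G')`:
no edge of `G'` sharing exactly one endpoint with `{p,q}` closes a triangle of `G`. -/
def ContractibleCond (G G' : SimpleGraph V) (p q : V) : Prop :=
  ∀ r : V, (G'.Adj p r → r ≠ q → ¬ G.Adj q r) ∧ (G'.Adj q r → r ≠ p → ¬ G.Adj p r)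

/-- `{p,q}` is a contractible edge of the pair `(G,G')`. -/
def ContractibleEdge (G G' : SimpleGraph V) (p q : V) : Prop :=
  G'.Adj p q ∧ ContractibleCond G G' p q

/-- `core` is a path between the two (distinct) endpoints `u` and `v`. -/
def IsPathBetween (core : SubG β) (u v : β) : Prop :=
  IsPathSub core ∧ u ∈ core.verts ∧ v ∈ core.verts ∧
    ∀ w ∈ core.verts, ((core.neighborSet w).ncard = 1 ↔ (w = u ∨ w = v))

/-- Delete a set of edges from a subgraph (keeping the vertices). -/
def delEdgesSub (H : SubG β) (s : Set (Sym2 β)) : SubG β where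
  verts := H.verts
  Adj x y := H.Adj x y ∧ s(x, y) ∉ s
  adj_sub := fun h => H.adj_sub h.1
  edge_vert := fun h => H.edge_vert h.1
  symm := by
    constructor
    rintro x y ⟨h, hs⟩
    refine ⟨h.symm, ?_⟩
    rwa [Sym2.eq_swap]

/-- The join of two graphs. -/
def joinG (H : SimpleGraph W) (K : SimpleGraph U) : SimpleGraph (W ⊕ U) where
  Adj x y :=
    match x, y with
    | Sum.inl a, Sum.inl b => H.Adj a b
    | Sum.inr a, Sum.inr b => K.Adj a b
    | Sum.inl _, Sum.inr _ => True
    | Sum.inr _, Sum.inl _ => True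
  symm := by
    constructor
    rintro (a | a) (b | b) h
    · exact h.symm
    · trivial
    · trivial
    · exact h.symm
  loopless := by
    constructor
    rintro (a | a) h
    · exact H.loopless.irrefl a h
    · exact K.loopless.irrefl a h

/-- The component graph `comp(G,C,K)`: vertices are the connected components of the
subgraph of `G` induced on the complement of `K`, two components being adjacent iff some
vertex of `K` is adjacent in `C` to both of them. -/
def compGraph (G C : SimpleGraph V) (K : Set V) :
    SimpleGraph (SimpleGraph.induce (Kᶜ : Set V) G).ConnectedComponent where
  Adj A B := A ≠ B ∧ ∃ v ∈ K, ∃ a b : (Kᶜ : Set V),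
    C.Adj v (a : V) ∧ C.Adj v (b : V) ∧
    (SimpleGraph.induce (Kᶜ : Set V) G).connectedComponentMk a = A ∧
    (SimpleGraph.induce (Kᶜ : Set V) G).connectedComponentMk b = B
  symm := by
    constructor
    rintro A B ⟨h, v, hv, a, b, h1, h2, h3, h4⟩
    exact ⟨h.symm, v, hv, b, a, h2, h1, h4, h3⟩
  loopless := by constructor; rintro A ⟨h, -⟩; exact h rfl

/-- The map merging both endpoints of an edge into the smaller one. -/
def minMerge [LinearOrder V] (a b : V) : V → V :=
  fun x => if x = a ∨ x = b then min a b else x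

/-- Contraction of the edge `{a,b}` of a graph, the merged vertex being named
`min a b` (the other endpoint remains as an isolated vertex). -/
def contrMin [LinearOrder V] (G : SimpleGraph V) (a b : V) : SimpleGraph V where
  Adj x y := x ≠ y ∧ ∃ x' y', G.Adj x' y' ∧ x = minMerge a b x' ∧ y = minMerge a b y'
  symm := by
    constructor
    rintro x y ⟨h, x', y', hxy, hx, hy⟩
    exact ⟨h.symm, y', x', hxy.symm, hy, hx⟩
  loopless := by constructor; rintro x ⟨h, -⟩; exact h rfl

/-- Simultaneous contraction in a pair of graphs. -/
def stepPair [LinearOrder V] (GG : SimpleGraph V × SimpleGraph V) (e : V × V) :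
    SimpleGraph V × SimpleGraph V :=
  (contrMin GG.1 e.1 e.2, contrMin GG.2 e.1 e.2)

/-- Iterated contraction of a list of edges (given by their original names; `f` is the
accumulated merging map). -/
def contractGo [LinearOrder V] (f : V → V) (GG : SimpleGraph V × SimpleGraph V) :
    List (V × V) → SimpleGraph V × SimpleGraph V
  | [] => GG
  | e :: l => contractGo (minMerge (f e.1) (f e.2) ∘ f) (stepPair GG (f e.1, f e.2)) l

/-- The iterated contraction is defined: at each step the image of the next edge is an
edge of the current second graph and is contractible in the current pair. -/
def DefinedGo [LinearOrder V] (f : V → V) (GG : SimpleGraph V × SimpleGraph V) :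
    List (V × V) → Prop
  | [] => True
  | e :: l => (GG.2.Adj (f e.1) (f e.2) ∧ ContractibleCond GG.1 GG.2 (f e.1) (f e.2)) ∧
      DefinedGo (minMerge (f e.1) (f e.2) ∘ f) (stepPair GG (f e.1, f e.2)) l


end ENPT

/-!
Write `Pⱼ` for the path of the `j`-th vertex of the hole, counted from the end `i` of the edge in
question, and suppose `P₀ ∼ P₁`. Then `P₀ ∪ P₁` is a path of `T`, and the union `R` of
`P₂, …, P_{k-1}` is a connected subgraph of `T`, since consecutive paths edge-intersect. The path
`P₀ ∪ P₁` carries an edge of `P₀ ∩ P₁`, an edge of `P₁ ∩ P₂ ⊆ P₁ ∩ R` and an edge of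
`P_{k-1} ∩ P₀ ⊆ R ∩ P₀`. In a tree, a connected subgraph containing two edges of a path contains
every edge of the path between them, so the middle one of these three edges lies in `P₀`, `P₁`
and `R` at once. This is impossible: `Pⱼ` misses `P₀` for `2 ≤ j ≤ k - 2`, and `P_{k-1}` misses
`P₁` because `k ≥ 4`.
-/

namespace SimpleGraph

variable {V : Type*} {G : SimpleGraph V}

lemma isAcyclic_spanningCoe {s : Set V} {H : SimpleGraph s} (h : H.IsAcyclic) :
    H.spanningCoe.IsAcyclic := by
  intro v c hc
  have hs : ∀ x ∈ c.support, x ∈ s := by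
    intro x hx
    obtain ⟨e, he, hxe⟩ := (Walk.mem_support_iff_exists_mem_edges_of_not_nil hc.not_nil).mp hx
    obtain ⟨y, rfl⟩ := Sym2.mem_iff_exists.mp hxe
    obtain ⟨-, a, -, -, rfl, -⟩ := c.adj_of_mem_edges he
    exact a.2
  have h' : (H.spanningCoe.induce s).IsAcyclic := by rwa [induce_spanningCoe]
  refine h' (c.induce s hs) ?_
  rw [← Walk.isCycle_map_iff_of_injective (f := (Embedding.induce (G := H.spanningCoe) s).toHom)
    (Embedding.induce (G := H.spanningCoe) s).injective, Walk.map_induce]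
  exact hc

lemma Subgraph.isAcyclic_spanningCoe {H : G.Subgraph} (h : H.coe.IsAcyclic) :
    H.spanningCoe.IsAcyclic := by
  rw [← Subgraph.spanningCoe_coe]
  exact SimpleGraph.isAcyclic_spanningCoe h

lemma Subgraph.Connected.reachable_spanningCoe {H : G.Subgraph} (h : H.Connected) {x y : V}
    (hx : x ∈ H.verts) (hy : y ∈ H.verts) : H.spanningCoe.Reachable x y :=
  (Subgraph.connected_iff'.mp h).preconnected ⟨x, hx⟩ ⟨y, hy⟩ |>.map
    ⟨Subtype.val, fun hab => hab⟩

lemma IsAcyclic.mem_edges_of_adj_start (hG : G.IsAcyclic) {u z : V} {p : G.Walk u z}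
    (hp : p.IsPath) (hmax : ∀ (u' z' : V) (q : G.Walk u' z'), q.IsPath → q.length ≤ p.length)
    {y : V} (hy : G.Adj u y) : s(u, y) ∈ p.edges := by
  by_cases hyp : y ∈ p.support
  · have hnil : ¬p.Nil := by
      intro h
      simp only [Walk.nil_iff_support_eq.mp h, List.mem_singleton] at hyp
      exact hy.ne hyp.symm
    rw [hG.eq_snd_of_adj_start hp hy hyp]
    exact Walk.mk_start_snd_mem_edges hnil
  · have := hmax _ _ _ (hp.cons hyp (h := hy.symm))
    simp at this

lemma Walk.IsPath.mem_edges_of_adj_getVert [Finite V] {u z : V} {p : G.Walk u z}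
    (hp : p.IsPath) {n : ℕ} (hn0 : n ≠ 0) (hn : n < p.length)
    (hdeg : (G.neighborSet (p.getVert n)).ncard ≤ 2) {y : V} (hy : G.Adj (p.getVert n) y) :
    s(p.getVert n, y) ∈ p.edges := by
  have hsub : p.toSubgraph.neighborSet (p.getVert n) ⊆ G.neighborSet (p.getVert n) :=
    fun w hw => p.toSubgraph.adj_sub hw
  have heq := Set.eq_of_subset_of_ncard_le hsub
    (hdeg.trans (hp.ncard_neighborSet_toSubgraph_internal_eq_two hn0 hn).ge)
  rw [← Walk.adj_toSubgraph_iff_mem_edges]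
  exact (heq ▸ hy : y ∈ p.toSubgraph.neighborSet (p.getVert n))

lemma IsAcyclic.mem_edges_of_adj_of_mem_support [Finite V] (hG : G.IsAcyclic)
    (hdeg : ∀ v, (G.neighborSet v).ncard ≤ 2) {u z : V} {p : G.Walk u z} (hp : p.IsPath)
    (hmax : ∀ (u' z' : V) (q : G.Walk u' z'), q.IsPath → q.length ≤ p.length)
    {x y : V} (hx : x ∈ p.support) (hxy : G.Adj x y) : s(x, y) ∈ p.edges := by
  obtain ⟨n, rfl, hn⟩ := Walk.mem_support_iff_exists_getVert.mp hx
  rcases Nat.eq_zero_or_pos n with rfl | hn0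
  · rw [Walk.getVert_zero] at hxy ⊢
    exact hG.mem_edges_of_adj_start hp hmax hxy
  rcases hn.lt_or_eq with hn | rfl
  · exact hp.mem_edges_of_adj_getVert hn0.ne' hn (hdeg _) hxy
  · rw [Walk.getVert_length] at hxy ⊢
    simpa using hG.mem_edges_of_adj_start hp.reverse (by simpa using hmax) hxy

lemma Subgraph.Connected.exists_isPath_edgeSet_subset [Finite V] {Q : G.Subgraph} (hQ : Q.Connected)
    (hQa : Q.spanningCoe.IsAcyclic) (hdeg : ∀ v, (Q.neighborSet v).ncard ≤ 2) :
    ∃ (u z : V) (p : Q.spanningCoe.Walk u z), p.IsPath ∧ ∀ e ∈ Q.edgeSet, e ∈ p.edges := by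
  have : Nonempty V := ⟨hQ.nonempty.some⟩
  obtain ⟨u, z, p, hp, hmax⟩ := Walk.exists_isPath_forall_isPath_length_le_length Q.spanningCoe
  -- A longest path contains every edge at each of its vertices, so by connectedness it visits
  -- every vertex of `Q`.
  have hsat {x y : V} (hx : x ∈ p.support) (hxy : Q.Adj x y) : s(x, y) ∈ p.edges :=
    hQa.mem_edges_of_adj_of_mem_support hdeg hp hmax hx hxy
  refine ⟨u, z, p, hp, Sym2.ind fun x y he => ?_⟩
  have hnil : ¬p.Nil := by
    have h₁ : 1 ≤ p.length := hmax _ _ _ (Walk.IsPath.of_adj (G := Q.spanningCoe) he)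
    rw [← Walk.length_eq_zero_iff]
    omega
  have hx : x ∈ p.support := by
    by_contra hx
    obtain ⟨w⟩ := hQ.reachable_spanningCoe (Q.edge_vert (p.adj_snd hnil)) (Q.edge_vert he)
    obtain ⟨d, -, hd₁, hd₂⟩ := w.exists_boundary_dart {v | v ∈ p.support} p.start_mem_support hx
    exact hd₂ (p.snd_mem_support_of_mem_edges (hsat hd₁ d.adj))
  exact hsat hx he

section Tree

variable {T H : G.Subgraph}

lemma Subgraph.Connected.edges_subset_edgeSet_of_isPath (hT : T.spanningCoe.IsAcyclic)
    (hHT : H ≤ T) (hH : H.Connected) {x y : V} {p : T.spanningCoe.Walk x y} (hp : p.IsPath)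
    (hx : x ∈ H.verts) (hy : y ∈ H.verts) : ∀ e ∈ p.edges, e ∈ H.edgeSet := by
  classical
  obtain ⟨q⟩ := hH.reachable_spanningCoe hx hy
  have hpq : p = q.bypass.mapLe (Subgraph.spanningCoe_le_of_le hHT) := congrArg Subtype.val <|
    (hT.subsingleton_path x y).elim ⟨p, hp⟩ ⟨_, q.bypass_isPath.mapLe _⟩
  intro e he
  rw [hpq, Walk.edges_mapLe_eq_edges] at he
  exact q.bypass.edges_subset_edgeSet he

lemma Subgraph.Connected.getElem_edges_mem_edgeSet (hT : T.spanningCoe.IsAcyclic) (hHT : H ≤ T)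
    (hH : H.Connected) {x y : V} {p : T.spanningCoe.Walk x y} (hp : p.IsPath) {i m j : ℕ}
    (him : i ≤ m) (hmj : m ≤ j) (hj : j < p.edges.length)
    (hi : p.edges[i] ∈ H.edgeSet) (hj' : p.edges[j] ∈ H.edgeSet) :
    p.edges[m] ∈ H.edgeSet := by
  have hlen : p.edges.length = p.length := p.length_edges
  rw [Walk.getElem_edges] at hi hj' ⊢
  have hstart : p.getVert i ∈ H.verts := H.edge_vert hi
  have hend : (p.drop i).getVert (j + 1 - i) ∈ H.verts := by
    rw [Walk.drop_getVert, show i + (j + 1 - i) = j + 1 by omega]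
    exact H.edge_vert hj'.symm
  refine hH.edges_subset_edgeSet_of_isPath hT hHT ((hp.drop i).take _) hstart hend _ ?_
  rw [Walk.edges_take, Walk.edges_drop, ← Walk.getElem_edges (by omega)]
  exact List.mem_iff_getElem.mpr ⟨m - i, by simp; omega, by simp [show i + (m - i) = m by omega]⟩

lemma Subgraph.exists_mem_edges_inter_of_isPath (hT : T.spanningCoe.IsAcyclic)
    {H₁ H₂ H₃ : G.Subgraph} (hH₁T : H₁ ≤ T) (hH₂T : H₂ ≤ T) (hH₃T : H₃ ≤ T)
    (hH₁ : H₁.Connected) (hH₂ : H₂.Connected) (hH₃ : H₃.Connected)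
    {x y : V} {p : T.spanningCoe.Walk x y} (hp : p.IsPath) {e₁ e₂ e₃ : Sym2 V}
    (he₁ : e₁ ∈ p.edges) (he₂ : e₂ ∈ p.edges) (he₃ : e₃ ∈ p.edges)
    (he₁₂ : e₁ ∈ H₂.edgeSet) (he₁₃ : e₁ ∈ H₃.edgeSet) (he₂₁ : e₂ ∈ H₁.edgeSet)
    (he₂₃ : e₂ ∈ H₃.edgeSet) (he₃₁ : e₃ ∈ H₁.edgeSet) (he₃₂ : e₃ ∈ H₂.edgeSet) :
    ∃ e ∈ p.edges, e ∈ H₁.edgeSet ∧ e ∈ H₂.edgeSet ∧ e ∈ H₃.edgeSet := by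
  obtain ⟨i₁, hi₁, rfl⟩ := List.getElem_of_mem he₁
  obtain ⟨i₂, hi₂, rfl⟩ := List.getElem_of_mem he₂
  obtain ⟨i₃, hi₃, rfl⟩ := List.getElem_of_mem he₃
  rcases le_total i₁ i₂ with h₁₂ | h₁₂ <;> rcases le_total i₂ i₃ with h₂₃ | h₂₃ <;>
    rcases le_total i₁ i₃ with h₁₃ | h₁₃
  -- the edge with the middle index lies between two edges of a common subgraph
  all_goals first
    | exact ⟨_, he₁, hH₁.getElem_edges_mem_edgeSet hT hH₁T hp (by omega) (by omega) hi₃ he₂₁ he₃₁,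
        he₁₂, he₁₃⟩
    | exact ⟨_, he₁, hH₁.getElem_edges_mem_edgeSet hT hH₁T hp (by omega) (by omega) hi₂ he₃₁ he₂₁,
        he₁₂, he₁₃⟩
    | exact ⟨_, he₂, he₂₁, hH₂.getElem_edges_mem_edgeSet hT hH₂T hp (by omega) (by omega) hi₃ he₁₂
        he₃₂, he₂₃⟩
    | exact ⟨_, he₂, he₂₁, hH₂.getElem_edges_mem_edgeSet hT hH₂T hp (by omega) (by omega) hi₁ he₃₂
        he₁₂, he₂₃⟩
    | exact ⟨_, he₃, he₃₁, he₃₂, hH₃.getElem_edges_mem_edgeSet hT hH₃T hp (by omega) (by omega) hi₂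
        he₁₃ he₂₃⟩
    | exact ⟨_, he₃, he₃₁, he₃₂, hH₃.getElem_edges_mem_edgeSet hT hH₃T hp (by omega) (by omega) hi₁
        he₂₃ he₁₃⟩

end Tree

end SimpleGraph

namespace ENPT

variable {β : Type}

lemma EdgeInt.verts_inf_nonempty {P Q : SubG β} (h : EdgeInt P Q) : (P ⊓ Q).verts.Nonempty := by
  obtain ⟨e, hP, hQ⟩ := h
  induction e using Sym2.ind with
  | _ x y => exact ⟨x, P.edge_vert hP, Q.edge_vert hQ⟩

lemma IsPathSub.sup_of_nonSplit {P Q : SubG β} (hP : IsPathSub P) (hQ : IsPathSub Q)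
    (hPQ : NonSplit P Q) : IsPathSub (P ⊔ Q) := by
  refine ⟨Subgraph.connected_sup hP.1.preconnected hQ.1.preconnected hPQ.1.verts_inf_nonempty,
    hP.2.1.mono (by simp), fun v => ?_⟩
  by_contra! hv
  have hsplit : v ∈ Split P Q := Nat.succ_le_of_lt hv
  simp [hPQ.2] at hsplit

lemma mem_edgeSet_partialSups {P : ℕ → SubG β} {n : ℕ} {e : Sym2 β} :
    e ∈ (partialSups P n).edgeSet ↔ ∃ j ≤ n, e ∈ (P j).edgeSet := by
  have := partialSups_iff_forall (f := P) (i := n) (fun H => e ∉ H.edgeSet)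
    (by simp [Subgraph.edgeSet_sup, not_or])
  simpa using not_congr this

lemma connected_partialSups {P : ℕ → SubG β} (hP : ∀ j, (P j).Connected)
    (hPP : ∀ j, EdgeInt (P j) (P (j + 1))) (n : ℕ) : (partialSups P n).Connected := by
  induction n with
  | zero => simpa using hP 0
  | succ n ih =>
    rw [← Order.succ_eq_add_one, partialSups_succ, Order.succ_eq_add_one]
    refine Subgraph.connected_sup ih.preconnected (hP _).preconnected ?_
    exact (EdgeInt.verts_inf_nonempty (hPP n)).mono
      (inf_le_inf_right _ (le_partialSups_of_le P le_rfl)).1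

theorem not_nonSplit_of_hole [Finite β] {T : SubG β} (hT : T.spanningCoe.IsAcyclic)
    {P : ℕ → SubG β} (hPT : ∀ m, P m ≤ T) (hP : ∀ m, IsPathSub (P m)) {k : ℕ} (hk : 4 ≤ k)
    (hcons : ∀ m, EdgeInt (P m) (P (m + 1))) (hper : P k = P 0)
    -- `b + 1 < k + a` excludes the wrap-around pair `(0, k - 1)`
    (hfar : ∀ a b, a + 1 < b → b < k → b + 1 < k + a → ¬EdgeInt (P a) (P b)) :
    ¬NonSplit (P 0) (P 1) := by
  intro hns
  set R := partialSups (fun j => P (j + 2)) (k - 3)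
  have hR : R.Connected :=
    connected_partialSups (fun j => (hP (j + 2)).1) (fun j => hcons (j + 2)) _
  have hRT : R ≤ T := partialSups_le _ _ _ fun j _ => hPT _
  have hQT : (P 0 ⊔ P 1).spanningCoe ≤ T.spanningCoe :=
    Subgraph.spanningCoe_le_of_le (sup_le (hPT 0) (hPT 1))
  have hQ := (hP 0).sup_of_nonSplit (hP 1) hns
  obtain ⟨u, z, p, hp, hpQ⟩ := hQ.1.exists_isPath_edgeSet_subset (hT.anti hQT) hQ.2.2
  have hp' : ∀ e ∈ (P 0).edgeSet ∪ (P 1).edgeSet, e ∈ (p.mapLe hQT).edges := fun e he => by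
    rw [Walk.edges_mapLe_eq_edges]
    exact hpQ e (by rwa [Subgraph.edgeSet_sup])
  obtain ⟨a, ha₁, ha₂⟩ := hcons 1
  obtain ⟨b, hb, hb₀⟩ : EdgeInt (P (k - 1)) (P 0) := by
    simpa [show k - 1 + 1 = k by omega, hper] using hcons (k - 1)
  obtain ⟨e, he₀, he₁⟩ := hns.1
  have haR : a ∈ R.edgeSet := mem_edgeSet_partialSups.2 ⟨0, by omega, ha₂⟩
  have hbR : b ∈ R.edgeSet :=
    mem_edgeSet_partialSups.2 ⟨k - 3, le_rfl, by rwa [show k - 3 + 2 = k - 1 by omega]⟩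
  obtain ⟨f, -, hf₀, hf₁, hfR⟩ := Subgraph.exists_mem_edges_inter_of_isPath hT (hPT 0) (hPT 1)
    hRT (hP 0).1 (hP 1).1 hR (hp.mapLe hQT) (hp' a (.inr ha₁)) (hp' b (.inl hb₀))
    (hp' e (.inl he₀)) ha₁ haR hb₀ hbR he₀ he₁
  obtain ⟨j, hj, hfj⟩ := mem_edgeSet_partialSups.1 hfR
  by_cases hjk : j + 4 ≤ k
  · exact hfar 0 (j + 2) (by omega) (by omega) (by omega) ⟨f, hf₀, hfj⟩
  · exact hfar 1 (j + 2) (by omega) (by omega) (by omega) ⟨f, hf₁, hfj⟩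

end ENPT

lemma ZMod.add_natCast_ne_add_natCast {k a b : ℕ} (i : ZMod k) (ha : a < k) (hb : b < k)
    (hab : a ≠ b) : i + (a : ZMod k) ≠ i + b := by
  rwa [Ne, add_right_inj, ZMod.natCast_eq_natCast_iff', Nat.mod_eq_of_lt ha, Nat.mod_eq_of_lt hb]

lemma SimpleGraph.not_adj_add_natCast_of_chordless {V : Type*} {G : SimpleGraph V} {k : ℕ}
    {v : ZMod k → V}
    (hchord : ∀ i j : ZMod k, i ≠ j → j ≠ i + 1 → i ≠ j + 1 → ¬ G.Adj (v i) (v j))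
    (i : ZMod k) {a b : ℕ} (hab : a + 1 < b) (hbk : b < k) (hba : b + 1 < k + a) :
    ¬ G.Adj (v (i + a)) (v (i + b)) := by
  refine hchord _ _ (i.add_natCast_ne_add_natCast (by omega) hbk (by omega)) ?_ ?_
  · simpa [add_assoc] using i.add_natCast_ne_add_natCast hbk (b := a + 1) (by omega) (by omega)
  · rcases (show b + 1 < k ∨ b + 1 = k by omega) with hb | hb
    · simpa [add_assoc] using i.add_natCast_ne_add_natCast (b := b + 1) (by omega) hb (by omega)
    · have hb₀ : (b : ZMod k) + 1 = 0 := by rw [← Nat.cast_add_one, hb, ZMod.natCast_self]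
      simpa [add_assoc, hb₀] using i.add_natCast_ne_add_natCast (b := 0) (by omega) (by omega)
        (by omega)

namespace ENPT

theorem stmt0_general {β V : Type} [Fintype β]
    (T : SubG β) (Ps : V → SubG β) (G G' : SimpleGraph V)
    (hrep : IsRep T Ps G G') (k : ℕ) (hk : 4 ≤ k) (v : ZMod k → V)
    (hinj : Function.Injective v)
    (hadj : ∀ i : ZMod k, G.Adj (v i) (v (i + 1)))
    (hchord : ∀ i j : ZMod k, i ≠ j → j ≠ i + 1 → i ≠ j + 1 → ¬ G.Adj (v i) (v j)) :
    ∀ i : ZMod k, ¬ G'.Adj (v i) (v (i + 1)) := by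
  intro i hG'
  have hG (x y : V) : G.Adj x y ↔ x ≠ y ∧ EdgeInt (Ps x) (Ps y) := by rw [← hrep.ept]; rfl
  refine not_nonSplit_of_hole (Subgraph.isAcyclic_spanningCoe hrep.tree.isAcyclic)
    (P := fun m => Ps (v (i + m))) (fun _ => hrep.sub _) (fun _ => hrep.path _) hk ?_ ?_ ?_ ?_
  · intro m
    simpa [add_assoc] using ((hG _ _).1 (hadj (i + m))).2
  · simp
  · intro a b hab hbk hba hE
    have hne := hinj.ne (i.add_natCast_ne_add_natCast (by omega) hbk (by omega : a ≠ b))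
    exact not_adj_add_natCast_of_chordless hchord i hab hbk hba ((hG _ _).2 ⟨hne, hE⟩)
  · simpa using (hrep.enpt ▸ hG' : (ENPTg Ps).Adj (v i) (v (i + 1))).2

/-- no hole of `G` with at least 4 vertices contains an edge of `G'`. -/
theorem stmt0 {β V : Type} [Fintype β] [Fintype V]
    (T : SubG β) (Ps : V → SubG β) (G G' : SimpleGraph V) (hle : G' ≤ G)
    (hrep : IsRep T Ps G G') (k : ℕ) (hk : 4 ≤ k) (v : ZMod k → V)
    (hinj : Function.Injective v)
    (hadj : ∀ i : ZMod k, G.Adj (v i) (v (i + 1)))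
    (hchord : ∀ i j : ZMod k, i ≠ j → j ≠ i + 1 → i ≠ j + 1 → ¬ G.Adj (v i) (v j)) :
    ∀ i : ZMod k, ¬ G'.Adj (v i) (v (i + 1)) :=
  stmt0_general T Ps G G' hrep k hk v hinj hadj hchord

end ENPT
end

section
/- Let ⟨T_1,𝒫_1⟩, …, ⟨T_n,𝒫_n⟩ be representations with path families indexed by a common finite vertex set V, such that for each i the representation ⟨T_{i+1},𝒫_{i+1}⟩ is obtained from ⟨T_i,𝒫_i⟩ by a finite sequence of minifying operations. If EPT(T_1,𝒫_1) = EPT(T_n,𝒫_n) and ENPT(T_1,𝒫_1) = ENPT(T_n,𝒫_n), then for every i, EPT(T_i,𝒫_i) = EPT(T_1,𝒫_1) and ENPT(T_i,𝒫_i) = ENPT(T_1,𝒫_1). -/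
open SimpleGraph

namespace ENPT

variable {β V W U : Type}

/-! A minifying operation can only destroy edge intersections, and two paths that were
non-splitting stay non-splitting for as long as they still edge-intersect. For a tail removal
this is monotonicity, as the paths only shrink. For the contraction of a tree edge `ab` it holds
because a tree has no triangles, so no two distinct tree edges are identified; and because a
connected subgraph of the tree containing both `a` and `b` contains the edge `ab`, so merging `a`
and `b` in the union of two non-splitting intersecting paths raises no degree above 2.
Composing along the chain, the EPT graphs decrease; as the first and the last one agree, all of
them agree, and the ENPT graphs are squeezed in the same way. -/

section Acyclic
variable {α : Type*} {G : SimpleGraph α} {T H : G.Subgraph} {a b : α}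

lemma _root_.SimpleGraph.Subgraph.natCard_coe_edgeSet (H : G.Subgraph) :
    Nat.card H.coe.edgeSet = H.edgeSet.ncard := by
  rw [← H.image_coe_edgeSet_coe, Set.ncard_image_of_injective _
    (Sym2.map.injective Subtype.val_injective), Nat.card_coe_set_eq]

lemma _root_.SimpleGraph.Subgraph.not_adj_of_adj_of_isAcyclic (hT : T.coe.IsAcyclic)
    (hab : T.Adj a b) {z : α} (haz : T.Adj a z) : ¬ T.Adj b z := fun hbz => by
  classical
  let a' : T.verts := ⟨a, T.edge_vert hab⟩
  let b' : T.verts := ⟨b, T.edge_vert hab.symm⟩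
  let z' : T.verts := ⟨z, T.edge_vert haz.symm⟩
  exact hT.cliqueFree le_rfl {a', b', z'} <| is3Clique_triple_iff.mpr
    ⟨(hab : T.coe.Adj a' b'), (haz : T.coe.Adj a' z'), (hbz : T.coe.Adj b' z')⟩

lemma _root_.SimpleGraph.Subgraph.Connected.adj_of_isAcyclic (hH : H.Connected)
    (hT : T.coe.IsAcyclic) (hle : H ≤ T) (ha : a ∈ H.verts) (hb : b ∈ H.verts)
    (hab : T.Adj a b) : H.Adj a b := by
  obtain ⟨p⟩ := hH.coe ⟨a, ha⟩ ⟨b, hb⟩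
  have hbridge := isAcyclic_iff_forall_adj_isBridge.mp hT
    (show T.coe.Adj ⟨a, hle.1 ha⟩ ⟨b, hle.1 hb⟩ from hab)
  have hmem := isBridge_iff_forall_walk_mem_edges.mp hbridge (p.map (Subgraph.inclusion hle))
  erw [Walk.edges_map, List.mem_map] at hmem
  obtain ⟨e, he, hmap⟩ := hmem
  have hval : Sym2.map Subtype.val e = s(a, b) := by
    simpa [Sym2.map_map] using congrArg (Sym2.map Subtype.val) hmap
  rw [← Subgraph.mem_edgeSet, ← hval, ← H.image_coe_edgeSet_coe]
  exact Set.mem_image_of_mem _ (p.edges_subset_edgeSet he)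

end Acyclic

section Merge
variable {β : Type} [DecidableEq β] {a b x y : β}

@[simp] lemma mergeMap_left : mergeMap a b a = a := by
  unfold mergeMap; split_ifs with h <;> simp [h]

@[simp] lemma mergeMap_right : mergeMap a b b = a := if_pos rfl

lemma mergeMap_of_ne (h : x ≠ b) : mergeMap a b x = x := if_neg h

lemma eq_or_of_mergeMap_eq (h : mergeMap a b x = mergeMap a b y) :
    x = y ∨ s(x, y) = s(a, b) := by
  unfold mergeMap at h
  split_ifs at h <;> subst_vars <;> simp

lemma injOn_map_mergeMap_edgeSet {G : SimpleGraph β} {H : G.Subgraph}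
    (h : ∀ z, H.Adj a z → ¬ H.Adj b z) : Set.InjOn (Sym2.map (mergeMap a b)) H.edgeSet := by
  have key : ∀ {x₁ y₁ x₂ y₂}, H.Adj x₁ y₁ → H.Adj x₂ y₂ → mergeMap a b x₁ = mergeMap a b x₂ →
      mergeMap a b y₁ = mergeMap a b y₂ → s(x₁, y₁) = s(x₂, y₂) := by
    intro x₁ y₁ x₂ y₂ h₁ h₂ hx hy
    rcases eq_or_of_mergeMap_eq hx with rfl | hx <;> rcases eq_or_of_mergeMap_eq hy with rfl | hy
    all_goals simp only [Sym2.eq_iff] at hx hy ⊢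
    all_goals grind [H.adj_comm, Subgraph.Adj.ne]
  rintro ⟨x₁, y₁⟩ h₁ ⟨x₂, y₂⟩ h₂ he
  simp only [Sym2.map_mk, Sym2.eq_iff] at he
  rcases he with ⟨hx, hy⟩ | ⟨hx, hy⟩
  · exact key h₁ h₂ hx hy
  · exact (key h₁ h₂.symm hx hy).trans Sym2.eq_swap

end Merge

section Split
variable {β : Type} {P P' Q Q' : SubG β}

lemma split_eq_empty_iff : Split P Q = ∅ ↔ ∀ w, ((P ⊔ Q).neighborSet w).ncard ≤ 2 := by
  simp only [Split, Set.eq_empty_iff_forall_notMem, Set.mem_ofPred_eq, not_le]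
  exact forall_congr' fun _ => Nat.lt_succ_iff

lemma split_eq_empty_of_le [Finite β] (hP : P' ≤ P) (hQ : Q' ≤ Q) (h : Split P Q = ∅) :
    Split P' Q' = ∅ := by
  rw [split_eq_empty_iff] at h ⊢
  exact fun w => (Set.ncard_le_ncard (Subgraph.neighborSet_subset_of_subgraph
    (sup_le_sup hP hQ) w) (Set.toFinite _)).trans (h w)

lemma EdgeInt.mono (hP : P ≤ P') (hQ : Q ≤ Q') (h : EdgeInt P Q) : EdgeInt P' Q' :=
  Set.Nonempty.mono (Set.inter_subset_inter (Subgraph.edgeSet_mono hP)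
    (Subgraph.edgeSet_mono hQ)) h

lemma EdgeInt.connected_sup (hP : P.Connected) (hQ : Q.Connected) (h : EdgeInt P Q) :
    (P ⊔ Q).Connected := by
  obtain ⟨e, he₁, he₂⟩ := h
  induction e using Sym2.ind with
  | _ x y =>
    exact Subgraph.connected_sup hP.preconnected hQ.preconnected
      ⟨x, P.edge_vert he₁, Q.edge_vert he₂⟩

end Split

section Contraction
variable {β : Type} [DecidableEq β] {a b w : β} {H K T P Q : SubG β}

lemma edgeSet_cImage (H : SubG β) :
    (cImage a b H).edgeSet = Sym2.map (mergeMap a b) '' (H.edgeSet \ {s(a, b)}) := by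
  ext e
  induction e using Sym2.ind with
  | _ x y =>
    simp only [Subgraph.mem_edgeSet, Set.mem_image, Set.mem_sdiff, Set.mem_singleton_iff]
    constructor
    · rintro ⟨hne, x', y', h, rfl, rfl⟩
      refine ⟨s(x', y'), ⟨h, fun hab => hne ?_⟩, rfl⟩
      rcases Sym2.eq_iff.mp hab with ⟨rfl, rfl⟩ | ⟨rfl, rfl⟩ <;> simp
    · rintro ⟨e', ⟨he', hab⟩, hmap⟩
      induction e' using Sym2.ind with
      | _ x' y' =>
        have hne : mergeMap a b x' ≠ mergeMap a b y' := fun h =>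
          (eq_or_of_mergeMap_eq h).elim he'.ne hab
        rcases Sym2.eq_iff.mp hmap with ⟨rfl, rfl⟩ | ⟨rfl, rfl⟩
        · exact ⟨hne, x', y', he', rfl, rfl⟩
        · exact ⟨hne.symm, y', x', he'.symm, rfl, rfl⟩

lemma verts_cImage (hab : a ≠ b) (ha : a ∈ H.verts) : (cImage a b H).verts = H.verts \ {b} := by
  ext y
  simp only [cImage, Set.mem_image, Set.mem_sdiff, Set.mem_singleton_iff]
  constructor
  · rintro ⟨x, hx, rfl⟩
    by_cases hxb : x = b
    · subst hxb; simpa using ⟨ha, hab⟩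
    · rw [mergeMap_of_ne hxb]; exact ⟨hx, hxb⟩
  · rintro ⟨hy, hyb⟩
    exact ⟨y, hy, mergeMap_of_ne hyb⟩

lemma cImage_mono (h : H ≤ K) : cImage a b H ≤ cImage a b K := by
  refine ⟨Set.image_mono h.1, ?_⟩
  rintro x y ⟨hne, x', y', hadj, rfl, rfl⟩
  exact ⟨hne, x', y', h.2 hadj, rfl, rfl⟩

lemma cImage_sup : cImage a b (P ⊔ Q) = cImage a b P ⊔ cImage a b Q := by
  ext x y
  · simp [cImage, Set.image_union]
  · simp only [cImage, Subgraph.sup_adj]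
    grind

lemma connected_cImage (h : H.Connected) : (cImage a b H).Connected := by
  have hreach : ∀ {s t : H.verts}, H.coe.Walk s t → (cImage a b H).coe.Reachable
      ⟨mergeMap a b s, Set.mem_image_of_mem _ s.2⟩
      ⟨mergeMap a b t, Set.mem_image_of_mem _ t.2⟩ := by
    intro s t p
    induction p with
    | nil => rfl
    | @cons s u t hsu _ ih =>
      refine Reachable.trans ?_ ih
      by_cases heq : mergeMap a b s = mergeMap a b u
      · exact (Subtype.ext heq : (⟨_, _⟩ : (cImage a b H).verts) = ⟨_, _⟩) ▸ Reachable.rfl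
      · exact Adj.reachable (show (cImage a b H).Adj _ _ from ⟨heq, s, u, hsu, rfl, rfl⟩)
  rw [Subgraph.connected_iff, Subgraph.preconnected_iff]
  refine ⟨?_, h.nonempty.image _⟩
  rintro ⟨_, x, hx, rfl⟩ ⟨_, y, hy, rfl⟩
  exact hreach (h.coe.preconnected ⟨x, hx⟩ ⟨y, hy⟩).some

/-- Contracting `ab` loses exactly the vertex `b` and the edge `ab`, and keeps connectivity. -/
lemma isTree_coe_cImage [Finite β] (hT : T.coe.IsTree) (hab : T.Adj a b) :
    (cImage a b T).coe.IsTree := by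
  have hinj : Set.InjOn (Sym2.map (mergeMap a b)) (T.edgeSet \ {s(a, b)}) :=
    (injOn_map_mergeMap_edgeSet fun _ => T.not_adj_of_adj_of_isAcyclic hT.isAcyclic hab).mono
      Set.sdiff_subset
  rw [isTree_iff_connected_and_card, ← Subgraph.connected_iff', Subgraph.natCard_coe_edgeSet,
    Nat.card_coe_set_eq] at hT ⊢
  have hE := Set.ncard_sdiff_singleton_add_one (Subgraph.mem_edgeSet.mpr hab) (Set.toFinite _)
  have hV := Set.ncard_sdiff_singleton_add_one (T.edge_vert hab.symm) (Set.toFinite _)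
  refine ⟨connected_cImage hT.1, ?_⟩
  rw [edgeSet_cImage, hinj.ncard_image, verts_cImage hab.ne (T.edge_vert hab)]
  omega

lemma EdgeInt.of_cImage (hT : T.coe.IsAcyclic) (hab : T.Adj a b) (hP : P ≤ T) (hQ : Q ≤ T)
    (h : EdgeInt (cImage a b P) (cImage a b Q)) : EdgeInt P Q := by
  obtain ⟨_, he₁, he₂⟩ := h
  rw [edgeSet_cImage] at he₁ he₂
  obtain ⟨e₁, ⟨h₁, -⟩, rfl⟩ := he₁
  obtain ⟨e₂, ⟨h₂, -⟩, he⟩ := he₂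
  have := injOn_map_mergeMap_edgeSet (fun _ => T.not_adj_of_adj_of_isAcyclic hT hab)
    (Subgraph.edgeSet_mono hQ h₂) (Subgraph.edgeSet_mono hP h₁) he
  exact ⟨e₁, h₁, this ▸ h₂⟩

lemma neighborSet_cImage_subset (hw : w ≠ a) :
    (cImage a b H).neighborSet w ⊆ mergeMap a b '' H.neighborSet w := by
  rintro y ⟨-, x', y', hadj, hx, rfl⟩
  obtain rfl : x' = w := by
    by_cases hb : x' = b
    · subst hb; exact absurd (hx.trans mergeMap_right) hw
    · exact (mergeMap_of_ne hb).symm.trans hx.symm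
  exact Set.mem_image_of_mem _ hadj

lemma neighborSet_cImage_left_subset :
    (cImage a b H).neighborSet a ⊆ (H.neighborSet a \ {b}) ∪ (H.neighborSet b \ {a}) := by
  rintro _ ⟨hne, x', y', hadj, hx, rfl⟩
  have hy' : y' ≠ a ∧ y' ≠ b := by
    constructor <;> rintro rfl <;> simp at hne
  rw [mergeMap_of_ne hy'.2]
  by_cases hb : x' = b
  · subst hb; exact Or.inr ⟨hadj, hy'.1⟩
  · rw [mergeMap_of_ne hb] at hx; subst hx; exact Or.inl ⟨hadj, hy'.2⟩

lemma ncard_neighborSet_cImage_le_two [Finite β] (hT : T.coe.IsAcyclic) (hab : T.Adj a b)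
    (hle : H ≤ T) (hH : H.Connected) (hdeg : ∀ w, (H.neighborSet w).ncard ≤ 2) (w : β) :
    ((cImage a b H).neighborSet w).ncard ≤ 2 := by
  rcases eq_or_ne w a with rfl | hw
  · have hsum := (Set.ncard_le_ncard (neighborSet_cImage_left_subset (H := H) (a := w) (b := b))
      (Set.toFinite _)).trans (Set.ncard_union_le _ _)
    rcases (H.neighborSet w).eq_empty_or_nonempty with hA | ⟨x, hx⟩
    · simp only [hA, Set.empty_sdiff, Set.ncard_empty] at hsum
      linarith [Set.ncard_sdiff_singleton_le (H.neighborSet b) w, hdeg b]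
    rcases (H.neighborSet b).eq_empty_or_nonempty with hB | ⟨y, hy⟩
    · simp only [hB, Set.empty_sdiff, Set.ncard_empty] at hsum
      linarith [Set.ncard_sdiff_singleton_le (H.neighborSet w) b, hdeg w]
    have hadj := hH.adj_of_isAcyclic hT hle (H.edge_vert hx) (H.edge_vert hy) hab
    rw [Set.ncard_sdiff_singleton_of_mem (show b ∈ H.neighborSet w from hadj),
      Set.ncard_sdiff_singleton_of_mem (show w ∈ H.neighborSet b from hadj.symm)] at hsum
    have := hdeg w; have := hdeg b
    omega
  · exact (Set.ncard_le_ncard (neighborSet_cImage_subset hw) (Set.toFinite _)).trans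
      ((Set.ncard_image_le (Set.toFinite _)).trans (hdeg w))

lemma split_cImage_eq_empty [Finite β] (hT : T.coe.IsAcyclic) (hab : T.Adj a b) (hP : P ≤ T)
    (hQ : Q ≤ T) (hPQ : (P ⊔ Q).Connected) (h : Split P Q = ∅) :
    Split (cImage a b P) (cImage a b Q) = ∅ := by
  rw [split_eq_empty_iff, ← cImage_sup]
  exact ncard_neighborSet_cImage_le_two hT hab (sup_le hP hQ) hPQ (split_eq_empty_iff.mp h)

end Contraction

section TailRemoval
variable {β : Type} {x y : β} {P : SubG β}

lemma delTail_le : delTail x P ≤ P :=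
  ⟨Set.sdiff_subset, fun _ _ h => h.1⟩

lemma delTail_eq_deleteVerts : delTail x P = P.deleteVerts {x} := by
  ext u w
  · simp [delTail]
  · simp only [delTail, Subgraph.deleteVerts_adj, Set.mem_singleton_iff]
    exact ⟨fun ⟨h, hu, hw⟩ => ⟨P.edge_vert h, hu, P.edge_vert h.symm, hw, h⟩,
      fun ⟨_, hu, _, hw, h⟩ => ⟨h, hu, hw⟩⟩

lemma connected_delTail (hP : P.Connected) (hxy : P.Adj x y)
    (hdeg : (P.neighborSet x).ncard = 1) : (delTail x P).Connected := by
  obtain ⟨z, hz⟩ := Set.ncard_eq_one.mp hdeg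
  rw [delTail_eq_deleteVerts, Subgraph.connected_iff, Subgraph.preconnected_iff,
    (Subgraph.coeDeleteVertsIso (G' := P) {x}).preconnected_iff]
  refine ⟨hP.coe.preconnected.induce_of_degree_eq_one fun v hv u hu w hw => ?_,
    y, P.edge_vert hxy.symm, by simpa using hxy.ne.symm⟩
  simp only [Set.mem_ofPred_eq, Set.mem_singleton_iff, not_not] at hv
  have hu' : u.val ∈ P.neighborSet x := hv ▸ hu
  have hw' : w.val ∈ P.neighborSet x := hv ▸ hw
  rw [hz] at hu' hw'
  exact Subtype.ext (hu'.trans hw'.symm)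

end TailRemoval

section Chain
variable {β V : Type}

structure ShrinksTo (P P' : V → SubG β) : Prop where
  edgeInt : ∀ u v, EdgeInt (P' u) (P' v) → EdgeInt (P u) (P v)
  nonSplit : ∀ u v, NonSplit (P u) (P v) → EdgeInt (P' u) (P' v) → NonSplit (P' u) (P' v)

lemma ShrinksTo.refl (P : V → SubG β) : ShrinksTo P P :=
  ⟨fun _ _ h => h, fun _ _ h _ => h⟩

lemma ShrinksTo.trans {P P' P'' : V → SubG β} (h : ShrinksTo P P') (h' : ShrinksTo P' P'') :
    ShrinksTo P P'' :=
  ⟨fun u v hi => h.edgeInt u v (h'.edgeInt u v hi),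
   fun u v hs hi => h'.nonSplit u v (h.nonSplit u v hs (h'.edgeInt u v hi)) hi⟩

lemma ShrinksTo.eptg_eq_and_enptg_eq {P₀ P P₁ : V → SubG β} (h₀ : ShrinksTo P₀ P)
    (h₁ : ShrinksTo P P₁) (hept : EPTg P₁ = EPTg P₀) (henpt : ENPTg P₁ = ENPTg P₀) :
    EPTg P = EPTg P₀ ∧ ENPTg P = ENPTg P₀ := by
  have edgeInt_iff : ∀ u v, u ≠ v → (EdgeInt (P₁ u) (P₁ v) ↔ EdgeInt (P₀ u) (P₀ v)) :=
    fun u v huv => and_congr_right_iff.mp (iff_of_eq congr($(hept).Adj u v)) huv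
  have nonSplit_iff : ∀ u v, u ≠ v → (NonSplit (P₁ u) (P₁ v) ↔ NonSplit (P₀ u) (P₀ v)) :=
    fun u v huv => and_congr_right_iff.mp (iff_of_eq congr($(henpt).Adj u v)) huv
  constructor <;> ext u v <;> refine and_congr_right fun huv => ⟨fun h => ?_, fun h => ?_⟩
  · exact h₀.edgeInt u v h
  · exact h₁.edgeInt u v ((edgeInt_iff u v huv).mpr h)
  · exact (nonSplit_iff u v huv).mp
      (h₁.nonSplit u v h ((edgeInt_iff u v huv).mpr (h₀.edgeInt u v h.1)))
  · exact h₀.nonSplit u v h (h₁.edgeInt u v ((edgeInt_iff u v huv).mpr h.1))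

def Rep.IsConnectedInTree (R : Rep β V) : Prop :=
  R.T.coe.IsTree ∧ (∀ v, R.P v ≤ R.T) ∧ ∀ v, (R.P v).Connected

lemma Rep.WF.isConnectedInTree {R : Rep β V} (h : R.WF) : R.IsConnectedInTree :=
  ⟨h.1, h.2.1, fun v => (h.2.2 v).1⟩

variable [DecidableEq β] [DecidableEq V] [Finite β] {R R' : Rep β V}

lemma MinifyStep.isConnectedInTree (hR : R.IsConnectedInTree) (h : MinifyStep R R') :
    R'.IsConnectedInTree := by
  obtain ⟨hT, hle, hconn⟩ := hR
  cases h with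
  | contract a b hab _ =>
    exact ⟨isTree_coe_cImage hT hab, fun v => cImage_mono (hle v),
      fun v => connected_cImage (hconn v)⟩
  | tail v₀ x y hxy hdeg _ =>
    refine ⟨hT, fun v => ?_, fun v => ?_⟩ <;> rcases eq_or_ne v v₀ with rfl | hv
    · simpa using delTail_le.trans (hle v)
    · simpa [hv] using hle v
    · simpa using connected_delTail (hconn v) hxy hdeg
    · simpa [hv] using hconn v

lemma MinifyStep.shrinksTo (hR : R.IsConnectedInTree) (h : MinifyStep R R') :
    ShrinksTo R.P R'.P := by
  obtain ⟨hT, hle, hconn⟩ := hR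
  cases h with
  | contract a b hab _ =>
    exact ⟨fun u v => EdgeInt.of_cImage hT.isAcyclic hab (hle u) (hle v),
      fun u v hs hi => ⟨hi, split_cImage_eq_empty hT.isAcyclic hab (hle u) (hle v)
        (hs.1.connected_sup (hconn u) (hconn v)) hs.2⟩⟩
  | tail v₀ x y _ _ _ =>
    have hle' : ∀ v, Function.update R.P v₀ (delTail x (R.P v₀)) v ≤ R.P v := by
      intro v
      rcases eq_or_ne v v₀ with rfl | hv
      · simpa using delTail_le
      · simp [hv]
    exact ⟨fun u v => EdgeInt.mono (hle' u) (hle' v),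
      fun u v hs hi => ⟨hi, split_eq_empty_of_le (hle' u) (hle' v) hs.2⟩⟩

lemma shrinksTo_of_reflTransGen (hR : R.IsConnectedInTree)
    (h : Relation.ReflTransGen MinifyStep R R') : R'.IsConnectedInTree ∧ ShrinksTo R.P R'.P := by
  induction h with
  | refl => exact ⟨hR, .refl _⟩
  | tail _ hstep ih => exact ⟨hstep.isConnectedInTree ih.1, ih.2.trans (hstep.shrinksTo ih.1)⟩

lemma shrinksTo_of_chain {n : ℕ} {R : ℕ → Rep β V} (h₀ : (R 0).IsConnectedInTree)
    (hstep : ∀ i, i + 1 < n → Relation.ReflTransGen MinifyStep (R i) (R (i + 1)))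
    {i j : ℕ} (hij : i ≤ j) (hj : j < n) : ShrinksTo (R i).P (R j).P := by
  have hconn : ∀ k < n, (R k).IsConnectedInTree := by
    intro k
    induction k with
    | zero => exact fun _ => h₀
    | succ k ih => exact fun hk => (shrinksTo_of_reflTransGen (ih (by omega)) (hstep k hk)).1
  induction j, hij using Nat.le_induction with
  | base => exact .refl _
  | succ j _ ih =>
    exact (ih (by omega)).trans (shrinksTo_of_reflTransGen (hconn j (by omega)) (hstep j hj)).2

end Chain

theorem stmt1_general {β V : Type} [Fintype β] [DecidableEq β] [DecidableEq V]
    (n : ℕ) (R : ℕ → Rep β V)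
    (hwf : ∀ i < n, (R i).WF)
    (hstep : ∀ i, i + 1 < n → Relation.ReflTransGen MinifyStep (R i) (R (i + 1)))
    (hept : EPTg (R (n - 1)).P = EPTg (R 0).P)
    (henpt : ENPTg (R (n - 1)).P = ENPTg (R 0).P) :
    ∀ i < n, EPTg (R i).P = EPTg (R 0).P ∧ ENPTg (R i).P = ENPTg (R 0).P := by
  intro i hi
  have h₀ := (hwf 0 (by omega)).isConnectedInTree
  exact (shrinksTo_of_chain h₀ hstep (Nat.zero_le i) hi).eptg_eq_and_enptg_eq
    (shrinksTo_of_chain h₀ hstep (Nat.le_sub_one_of_lt hi) (by omega)) hept henpt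

/-- if the first and last representations of a chain of minifying operations
have the same EPT and ENPT graphs, then so do all intermediate representations. -/
theorem stmt1 {β V : Type} [Fintype β] [Fintype V] [DecidableEq β] [DecidableEq V]
    (n : ℕ) (hn : 1 ≤ n) (R : ℕ → Rep β V)
    (hwf : ∀ i < n, (R i).WF)
    (hstep : ∀ i, i + 1 < n → Relation.ReflTransGen MinifyStep (R i) (R (i + 1)))
    (hept : EPTg (R (n - 1)).P = EPTg (R 0).P)
    (henpt : ENPTg (R (n - 1)).P = ENPTg (R 0).P) :
    ∀ i < n, EPTg (R i).P = EPTg (R 0).P ∧ ENPTg (R i).P = ENPTg (R 0).P :=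
  stmt1_general n R hwf hstep hept henpt

end ENPT
end

section
/- Let (G,G') be a pair that admits a representation, and let e_1, …, e_k be edges of G' such that the iterated contraction (G,G')/e_1/⋯/e_k is defined. Then for every permutation π of {1,…,k}, the iterated contraction (G,G')/e_{π(1)}/⋯/e_{π(k)} is also defined, and the two resulting pairs are equal. -/
/-!
Permutations are generated by adjacent transpositions, so it suffices to swap two consecutive
contractions of `{a, b}` and `{c, d}`. Both orders produce the same merging map (every vertex of
the merged classes goes to their minimum), hence the same pair. Contractibility survives the swap:
a triangle witnessing non-contractibility in the new order is mapped, by the first contraction, to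
one witnessing it in the old order. Along the way the second graph stays inside the first and each
pending edge stays an edge of the second graph until its endpoints are identified.
-/

open SimpleGraph

namespace ENPT

variable {β V W U : Type}

lemma ContractibleCond.symm {A B : SimpleGraph V} {p q : V} (h : ContractibleCond A B p q) :
    ContractibleCond A B q p := fun r => ⟨(h r).2, (h r).1⟩

def ContractionInvariant (f : V → V) (GG : SimpleGraph V × SimpleGraph V) (l : List (V × V)) :
    Prop :=
  GG.2 ≤ GG.1 ∧ ∀ e ∈ l, f e.1 ≠ f e.2 → GG.2.Adj (f e.1) (f e.2)

lemma ContractionInvariant.of_perm {f : V → V} {GG : SimpleGraph V × SimpleGraph V}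
    {l l' : List (V × V)} (hp : l.Perm l') (h : ContractionInvariant f GG l) :
    ContractionInvariant f GG l' :=
  ⟨h.1, fun e he => h.2 e (hp.symm.subset he)⟩

section Contraction

variable [LinearOrder V]

lemma minMerge_comm (a b : V) : minMerge a b = minMerge b a :=
  funext fun x => by simp only [minMerge, or_comm, min_comm]

lemma contrMin_comm (G : SimpleGraph V) (a b : V) : contrMin G a b = contrMin G b a := by
  ext x y
  simp only [contrMin, minMerge_comm a b]

lemma contrMin_adj_minMerge {G : SimpleGraph V} {a b u v : V} (h : G.Adj u v)
    (hne : minMerge a b u ≠ minMerge a b v) :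
    (contrMin G a b).Adj (minMerge a b u) (minMerge a b v) :=
  ⟨hne, u, v, h, rfl, rfl⟩

lemma contrMin_mono {A B : SimpleGraph V} (h : B ≤ A) (a b : V) :
    contrMin B a b ≤ contrMin A a b := by
  rintro x y ⟨hxy, u, v, huv, hu, hv⟩
  exact ⟨hxy, u, v, h huv, hu, hv⟩

lemma contrMin_contrMin_adj {G : SimpleGraph V} {a b c d x y : V} :
    (contrMin (contrMin G a b) c d).Adj x y ↔
      x ≠ y ∧ ∃ u v, G.Adj u v ∧
        x = minMerge c d (minMerge a b u) ∧ y = minMerge c d (minMerge a b v) := by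
  constructor
  · rintro ⟨hxy, x1, y1, ⟨-, u, v, huv, rfl, rfl⟩, rfl, rfl⟩
    exact ⟨hxy, u, v, huv, rfl, rfl⟩
  · rintro ⟨hxy, u, v, huv, rfl, rfl⟩
    exact ⟨hxy, _, _, ⟨fun h => hxy (by rw [h]), u, v, huv, rfl, rfl⟩, rfl, rfl⟩

lemma contrMin_contrMin_eq {G : SimpleGraph V} {a b c d a' b' c' d' : V}
    (h : minMerge c' d' ∘ minMerge a b = minMerge a' b' ∘ minMerge c d) :
    contrMin (contrMin G a b) c' d' = contrMin (contrMin G c d) a' b' := by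
  have h' (x : V) : minMerge c' d' (minMerge a b x) = minMerge a' b' (minMerge c d x) :=
    congrFun h x
  ext x y
  simp only [contrMin_contrMin_adj, h']

variable {a b c d : V}

lemma minMerge_minMerge_swap (hab : a ≠ b) (hcd : c ≠ d)
    (hne : minMerge a b c ≠ minMerge a b d) :
    minMerge (minMerge a b c) (minMerge a b d) ∘ minMerge a b
      = minMerge (minMerge c d a) (minMerge c d b) ∘ minMerge c d := by
  funext x
  simp only [minMerge, Function.comp_apply] at *
  grind

lemma minMerge_ne_minMerge_swap (hab : a ≠ b) (hcd : c ≠ d)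
    (hne : minMerge a b c ≠ minMerge a b d) : minMerge c d a ≠ minMerge c d b := by
  simp only [minMerge] at *
  grind

lemma stepPair_stepPair_swap (GG : SimpleGraph V × SimpleGraph V) (hab : a ≠ b) (hcd : c ≠ d)
    (hne : minMerge a b c ≠ minMerge a b d) :
    stepPair (stepPair GG (a, b)) (minMerge a b c, minMerge a b d)
      = stepPair (stepPair GG (c, d)) (minMerge c d a, minMerge c d b) := by
  have h := minMerge_minMerge_swap hab hcd hne
  exact Prod.ext (contrMin_contrMin_eq h) (contrMin_contrMin_eq h)

variable {A B : SimpleGraph V}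

/- The next two lemmas are case analyses on which of the vertices involved coincide: in each
case a configuration violating the new contractibility condition maps to one violating `h₁`
or `h₂` at the instance listed. -/

lemma not_adj_of_contractibleCond_contrMin (hBA : B ≤ A) (hcd : B.Adj c d)
    (h₁ : ContractibleCond A B a b) (hne : minMerge a b c ≠ minMerge a b d)
    (h₂ : ContractibleCond (contrMin A a b) (contrMin B a b) (minMerge a b c) (minMerge a b d))
    {r : V} (hcr : B.Adj c r) (hrd : r ≠ d) : ¬ A.Adj d r := by
  intro hdr
  have := hcr.ne
  have := h₁ c
  have := h₁ d
  have := h₂ (minMerge a b r)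
  have := hBA hcd
  have := fun h => contrMin_adj_minMerge (a := a) (b := b) hcr h
  have := fun h => contrMin_adj_minMerge (a := a) (b := b) hdr h
  simp only [minMerge] at *
  grind [SimpleGraph.Adj.symm]

lemma not_adj_contrMin_of_contractibleCond_contrMin (hab : B.Adj a b)
    (h₁ : ContractibleCond A B a b) (hne : minMerge a b c ≠ minMerge a b d)
    (h₂ : ContractibleCond (contrMin A a b) (contrMin B a b) (minMerge a b c) (minMerge a b d))
    {s : V} (has : (contrMin B c d).Adj (minMerge c d a) s) (hsb : s ≠ minMerge c d b) :
    ¬ (contrMin A c d).Adj (minMerge c d b) s := by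
  obtain ⟨has, u, v, huv, hu, rfl⟩ := has
  rintro ⟨hbs, x, y, hxy, hx, hy⟩
  have := hab.ne
  have := h₁ y
  have := h₂ (minMerge a b a)
  have := h₂ (minMerge a b y)
  have := fun h => contrMin_adj_minMerge (a := a) (b := b) huv.symm h
  have := fun h => contrMin_adj_minMerge (a := a) (b := b) hxy.symm h
  simp only [minMerge] at *
  grind (splits := 30) [SimpleGraph.Adj.symm]

lemma contractibleCond_swap (hBA : B ≤ A) (hab : B.Adj a b) (hcd : B.Adj c d)
    (h₁ : ContractibleCond A B a b) (hne : minMerge a b c ≠ minMerge a b d)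
    (h₂ : ContractibleCond (contrMin A a b) (contrMin B a b) (minMerge a b c) (minMerge a b d)) :
    ContractibleCond A B c d ∧
      ContractibleCond (contrMin A c d) (contrMin B c d) (minMerge c d a) (minMerge c d b) := by
  have hne' : minMerge b a c ≠ minMerge b a d := by rwa [minMerge_comm b]
  have h₂' : ContractibleCond (contrMin A b a) (contrMin B b a)
      (minMerge b a c) (minMerge b a d) := by
    rwa [contrMin_comm A, contrMin_comm B, minMerge_comm b]
  refine ⟨fun r => ⟨?_, ?_⟩, fun s => ⟨?_, ?_⟩⟩
  · exact not_adj_of_contractibleCond_contrMin hBA hcd h₁ hne h₂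
  · exact not_adj_of_contractibleCond_contrMin hBA hcd.symm h₁ hne.symm h₂.symm
  · exact not_adj_contrMin_of_contractibleCond_contrMin hab h₁ hne h₂
  · exact not_adj_contrMin_of_contractibleCond_contrMin hab.symm h₁.symm hne' h₂'

lemma ContractionInvariant.cons {f : V → V} {GG : SimpleGraph V × SimpleGraph V} {x : V × V}
    {l : List (V × V)} (h : ContractionInvariant f GG (x :: l)) :
    ContractionInvariant (minMerge (f x.1) (f x.2) ∘ f) (stepPair GG (f x.1, f x.2)) l := by
  refine ⟨contrMin_mono h.1 _ _, fun e he hne => ?_⟩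
  have hne' : f e.1 ≠ f e.2 := fun h => hne (by simp only [Function.comp_apply, h])
  exact contrMin_adj_minMerge (h.2 e (List.mem_cons_of_mem x he) hne') hne

lemma definedGo_swap {f : V → V} {GG : SimpleGraph V × SimpleGraph V} {x y : V × V}
    {l : List (V × V)} (hinv : ContractionInvariant f GG (y :: x :: l))
    (hd : DefinedGo f GG (y :: x :: l)) :
    DefinedGo f GG (x :: y :: l) ∧
      contractGo f GG (y :: x :: l) = contractGo f GG (x :: y :: l) := by
  set a := f y.1
  set b := f y.2
  set c := f x.1
  set d := f x.2
  obtain ⟨⟨hab, h₁⟩, ⟨hab_cd, h₂⟩, hl⟩ := hd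
  have hne : minMerge a b c ≠ minMerge a b d := hab_cd.ne
  have hcd : c ≠ d := fun h => hne (by rw [h])
  have hcdB : GG.2.Adj c d := hinv.2 x (by simp) hcd
  obtain ⟨h₁', h₂'⟩ := contractibleCond_swap hinv.1 hab hcdB h₁ hne h₂
  have hpair := stepPair_stepPair_swap GG hab.ne hcd hne
  have hmap : minMerge (minMerge c d a) (minMerge c d b) ∘ minMerge c d ∘ f
      = minMerge (minMerge a b c) (minMerge a b d) ∘ minMerge a b ∘ f := by
    rw [← Function.comp_assoc, ← Function.comp_assoc, minMerge_minMerge_swap hab.ne hcd hne]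
  have hba_cd : (contrMin GG.2 c d).Adj (minMerge c d a) (minMerge c d b) :=
    contrMin_adj_minMerge hab (minMerge_ne_minMerge_swap hab.ne hcd hne)
  refine ⟨⟨⟨hcdB, h₁'⟩, ⟨hba_cd, h₂'⟩, ?_⟩, ?_⟩
  · change DefinedGo (minMerge (minMerge c d a) (minMerge c d b) ∘ minMerge c d ∘ f)
      (stepPair (stepPair GG (c, d)) (minMerge c d a, minMerge c d b)) l
    rwa [hmap, ← hpair]
  · change contractGo (minMerge (minMerge a b c) (minMerge a b d) ∘ minMerge a b ∘ f)
        (stepPair (stepPair GG (a, b)) (minMerge a b c, minMerge a b d)) l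
      = contractGo (minMerge (minMerge c d a) (minMerge c d b) ∘ minMerge c d ∘ f)
        (stepPair (stepPair GG (c, d)) (minMerge c d a, minMerge c d b)) l
    rw [hmap, hpair]

theorem definedGo_perm {l l' : List (V × V)} (hp : l.Perm l') {f : V → V}
    {GG : SimpleGraph V × SimpleGraph V} (hinv : ContractionInvariant f GG l)
    (hd : DefinedGo f GG l) : DefinedGo f GG l' ∧ contractGo f GG l = contractGo f GG l' := by
  induction hp generalizing f GG with
  | nil => exact ⟨trivial, rfl⟩
  | cons x _ ih =>
    obtain ⟨hd', he⟩ := ih hinv.cons hd.2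
    exact ⟨⟨hd.1, hd'⟩, he⟩
  | swap x y l => exact definedGo_swap hinv hd
  | trans p₁ _ ih₁ ih₂ =>
    obtain ⟨hd₂, he₂⟩ := ih₁ hinv hd
    obtain ⟨hd₃, he₃⟩ := ih₂ (hinv.of_perm p₁) hd₂
    exact ⟨hd₃, he₂.trans he₃⟩

end Contraction

theorem stmt3_general {V : Type} [LinearOrder V]
    (G G' : SimpleGraph V) (hle : G' ≤ G)
    (l l' : List (V × V))
    (hedges : ∀ e ∈ l, G'.Adj e.1 e.2)
    (hperm : l.Perm l')
    (hdef : DefinedGo id (G, G') l) :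
    DefinedGo id (G, G') l' ∧ contractGo id (G, G') l = contractGo id (G, G') l' :=
  definedGo_perm hperm ⟨hle, fun e he _ => hedges e he⟩ hdef

/-- the order of an iterated contraction is irrelevant: any permutation of a
defined sequence of contractions is defined and yields the same pair. -/
theorem stmt3 {V : Type} [Fintype V] [LinearOrder V]
    (G G' : SimpleGraph V) (hle : G' ≤ G)
    (hrep : ∃ (β : Type) (_ : Fintype β) (T : SubG β) (Ps : V → SubG β), IsRep T Ps G G')
    (l l' : List (V × V))
    (hedges : ∀ e ∈ l, G'.Adj e.1 e.2)
    (hperm : l.Perm l')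
    (hdef : DefinedGo id (G, G') l) :
    DefinedGo id (G, G') l' ∧ contractGo id (G, G') l = contractGo id (G, G') l' :=
  stmt3_general G G' hle l l' hedges hperm hdef

end ENPT
end
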